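/- Let u¹, u² : ℝ → ℝ be smooth with u²(x) ≠ 0 for all x. Define differential operators on pairs ξ = (ξ₁, ξ₂) of smooth functions by 𝒫₁;₀(ξ) = ( −(u²ξ₁)′ − u²ξ₁′ − (u²ξ₂)′, −u²ξ₁′ ), K(ξ) = (−ξ₁ + ξ₂, ξ₂/u²), and Kᵀ(ξ) = (−ξ₁, ξ₁ + ξ₂/u²). Then for every pair ξ, (K ∘ 𝒫₁;₀ ∘ Kᵀ)(ξ) = (ξ₂′, ξ₁′). That is, under the change of variables v¹ = u² − u¹, v² = log u², the dispersionless limit 𝒫₁;₀ of the first Hamiltonian operator of the Ablowitz–Ladik hierarchy becomes the constant operator [[0, ∂ₓ],[∂ₓ, 0]] associated with the flat metric η = [[0,1],[1,0]] of the generalized Frobenius manifold with potential F = ½(v¹)²v² + v¹e^{v²} + ½(v¹)²log v¹. -/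

import Mathlib

/-- The dispersionless limit of the first Hamiltonian operator of the Ablowitz–Ladik
hierarchy, `𝒫₁;₀(ξ) = ( −(u²ξ₁)′ − u²ξ₁′ − (u²ξ₂)′, −u²ξ₁′ )`. -/
noncomputable def P10 (u2 : ℝ → ℝ) (ξ : (ℝ → ℝ) × (ℝ → ℝ)) : (ℝ → ℝ) × (ℝ → ℝ) :=
  (fun x => -deriv (fun y => u2 y * ξ.1 y) x - u2 x * deriv ξ.1 x
      - deriv (fun y => u2 y * ξ.2 y) x,
   fun x => -u2 x * deriv ξ.1 x)

/-- The Jacobian `K(ξ) = (−ξ₁ + ξ₂, ξ₂/u²)` of the change of variables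
`v¹ = u² − u¹`, `v² = log u²`. -/
noncomputable def Kop (u2 : ℝ → ℝ) (ξ : (ℝ → ℝ) × (ℝ → ℝ)) : (ℝ → ℝ) × (ℝ → ℝ) :=
  (fun x => -ξ.1 x + ξ.2 x, fun x => ξ.2 x / u2 x)

/-- The transpose Jacobian `Kᵀ(ξ) = (−ξ₁, ξ₁ + ξ₂/u²)`. -/
noncomputable def KopT (u2 : ℝ → ℝ) (ξ : (ℝ → ℝ) × (ℝ → ℝ)) : (ℝ → ℝ) × (ℝ → ℝ) :=
  (fun x => -ξ.1 x, fun x => ξ.1 x + ξ.2 x / u2 x)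

/-! Conjugating by `K` only rearranges terms: the `u²ξ₁′` terms cancel pointwise, leaving
`(u²ξ₁ + ξ₂)′ − (u²ξ₁)′` and `ξ₁′`, and smoothness is needed only to split the first
derivative. -/

section

variable {u2 : ℝ → ℝ}

theorem mul_KopT_snd (hu2ne : ∀ x : ℝ, u2 x ≠ 0) (ξ : (ℝ → ℝ) × (ℝ → ℝ)) :
    (fun y => u2 y * (KopT u2 ξ).2 y) = fun y => u2 y * ξ.1 y + ξ.2 y := by
  funext y
  rw [KopT, mul_add, mul_div_cancel₀ _ (hu2ne y)]

theorem P10_KopT (hu2ne : ∀ x : ℝ, u2 x ≠ 0) (ξ : (ℝ → ℝ) × (ℝ → ℝ)) :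
    P10 u2 (KopT u2 ξ) =
      (fun x => deriv (fun y => u2 y * ξ.1 y) x + u2 x * deriv ξ.1 x
          - deriv (fun y => u2 y * ξ.1 y + ξ.2 y) x,
       fun x => u2 x * deriv ξ.1 x) := by
  have hneg : (fun y => u2 y * (KopT u2 ξ).1 y) = fun y => -(u2 y * ξ.1 y) := by
    funext y
    simp only [KopT, mul_neg]
  have hderiv_neg : deriv (KopT u2 ξ).1 = fun x => -deriv ξ.1 x := by
    funext x
    exact deriv.neg
  rw [P10, hneg, mul_KopT_snd hu2ne, hderiv_neg]
  refine Prod.ext (funext fun x => ?_) (funext fun x => ?_)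
  · simp only [deriv.fun_neg]
    ring
  · simp only [mul_neg, neg_mul, neg_neg]

theorem Kop_P10_KopT (hu2ne : ∀ x : ℝ, u2 x ≠ 0) (ξ : (ℝ → ℝ) × (ℝ → ℝ)) :
    Kop u2 (P10 u2 (KopT u2 ξ)) =
      (fun x => deriv (fun y => u2 y * ξ.1 y + ξ.2 y) x - deriv (fun y => u2 y * ξ.1 y) x,
       deriv ξ.1) := by
  rw [P10_KopT hu2ne, Kop]
  refine Prod.ext (funext fun x => ?_) (funext fun x => ?_)
  · simp only
    ring
  · exact mul_div_cancel_left₀ _ (hu2ne x)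

end

theorem dispersionless_P1_constant_form
    (u2 : ℝ → ℝ) (hu2 : ContDiff ℝ (⊤ : ℕ∞) u2)
    (hu2ne : ∀ x : ℝ, u2 x ≠ 0)
    (ξ1 ξ2 : ℝ → ℝ) (hξ1 : ContDiff ℝ (⊤ : ℕ∞) ξ1) (hξ2 : ContDiff ℝ (⊤ : ℕ∞) ξ2) :
    (Kop u2 ∘ P10 u2 ∘ KopT u2) (ξ1, ξ2) = (deriv ξ2, deriv ξ1) := by
  have hprod : Differentiable ℝ fun y => u2 y * ξ1 y :=
    (hu2.differentiable (by simp)).mul (hξ1.differentiable (by simp))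
  rw [Function.comp_apply, Function.comp_apply, Kop_P10_KopT hu2ne]
  refine Prod.ext (funext fun x => ?_) rfl
  dsimp only
  rw [deriv_fun_add (hprod x) (hξ2.differentiable (by simp) x), add_sub_cancel_left]
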